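/- For every reachable state (ξ₁, ξ₂) of the monitor DBA U(Gψ'), there exists a formula ξ such that ξ₁ ∧ ξ₂ is logically equivalent to ξ ∧ ψ'; consequently af(ξ₁, ν) ∧ af(ξ₂, ν) semantically entails af(ψ', ν) for every letter ν. -/

import Mathlib

/-!
`af` is the one-letter semantic derivative: `w ⊨ af(φ, ν)` iff `νw ⊨ φ`. Hence `af(·, ν)`
preserves entailment. Every reachable state other than `(ψ', tt)` is a successor, and both
branches of `δ` conjoin `ψ'` to `af(ξ₂, ν)`, so `ξ₁ ∧ ξ₂ ≡ ξ ∧ ψ'` with `ξ = af(ξ₂, ν)` or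
`ξ = af(ξ₁, ν) ∧ af(ξ₂, ν)`. The entailment `ξ₁ ∧ ξ₂ ⊨ ψ'` then passes through `af(·, ν)`.
-/

/-- LTL formulas in negation normal form over atomic propositions `AP`:
`φ ::= tt | ff | a | ¬a | φ∧φ | φ∨φ | Xφ | Fφ | Gφ | φUφ`. -/
inductive LTL (AP : Type) : Type
  | tt : LTL AP
  | ff : LTL AP
  | atom : AP → LTL AP
  | natom : AP → LTL AP
  | conj : LTL AP → LTL AP → LTL AP
  | disj : LTL AP → LTL AP → LTL AP
  | next : LTL AP → LTL AP
  | ev : LTL AP → LTL AP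
  | alw : LTL AP → LTL AP
  | untl : LTL AP → LTL AP → LTL AP

variable {AP : Type}

/-- The suffix of an ω-word: `wordDrop k w = w(k) w(k+1) ⋯`. -/
def wordDrop (k : ℕ) (w : ℕ → Set AP) : ℕ → Set AP := fun i => w (i + k)

/-- Standard LTL semantics over ω-words (letters are sets of atomic propositions). -/
def Sat : (ℕ → Set AP) → LTL AP → Prop
  | _, .tt => True
  | _, .ff => False
  | w, .atom a => a ∈ w 0
  | w, .natom a => a ∉ w 0
  | w, .conj φ ψ => Sat w φ ∧ Sat w ψ
  | w, .disj φ ψ => Sat w φ ∨ Sat w ψ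
  | w, .next φ => Sat (wordDrop 1 w) φ
  | w, .ev φ => ∃ k, Sat (wordDrop k w) φ
  | w, .alw φ => ∀ k, Sat (wordDrop k w) φ
  | w, .untl φ ψ => ∃ k, Sat (wordDrop k w) ψ ∧ ∀ j < k, Sat (wordDrop j w) φ

open Classical in
/-- The "after" function `af(φ, ν)` for a single letter `ν`. -/
noncomputable def af : LTL AP → Set AP → LTL AP
  | .tt, _ => .tt
  | .ff, _ => .ff
  | .atom a, ν => if a ∈ ν then .tt else .ff
  | .natom a, ν => if a ∈ ν then .ff else .tt
  | .conj φ ψ, ν => .conj (af φ ν) (af ψ ν)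
  | .disj φ ψ, ν => .disj (af φ ν) (af ψ ν)
  | .next φ, _ => φ
  | .ev φ, ν => .disj (af φ ν) (.ev φ)
  | .alw φ, ν => .conj (af φ ν) (.alw φ)
  | .untl φ ψ, ν => .disj (af ψ ν) (.conj (af φ ν) (.untl φ ψ))

/-- `af` extended to finite words: `af(φ, ε) = φ`, `af(φ, νv) = af(af(φ,ν), v)`. -/
noncomputable def afWord : LTL AP → List (Set AP) → LTL AP
  | φ, [] => φ
  | φ, ν :: v => afWord (af φ ν) v

/-- Prepend a finite word `v` to an ω-word `w`. -/
def prependWord (v : List (Set AP)) (w : ℕ → Set AP) : ℕ → Set AP :=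
  fun i => if h : i < v.length then v.get ⟨i, h⟩ else w (i - v.length)

/-- Propositional evaluation of a formula: proper formulas (non-`∧`/`∨`) are treated
as propositional atoms, evaluated by the assignment `v`. -/
def propEval (v : LTL AP → Prop) : LTL AP → Prop
  | .tt => True
  | .ff => False
  | .conj φ ψ => propEval v φ ∧ propEval v ψ
  | .disj φ ψ => propEval v φ ∨ propEval v ψ
  | φ => v φ

/-- Propositional equivalence `≡_P` of formulas. -/
def PropEquiv (φ ψ : LTL AP) : Prop := ∀ v, propEval v φ ↔ propEval v ψ

open Classical in
/-- The transition function of the monitor DBA `U(Gψ')`: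
`δ((ξ₁,ξ₂), ν) = (af(ξ₂,ν) ∧ ψ', tt)` if `af(ξ₁,ν) ≡_P tt`, and
`(af(ξ₁,ν), af(ξ₂,ν) ∧ ψ')` otherwise. -/
noncomputable def monStep (ψ' : LTL AP) (p : LTL AP × LTL AP) (ν : Set AP) :
    LTL AP × LTL AP :=
  if PropEquiv (af p.1 ν) .tt then (.conj (af p.2 ν) ψ', .tt)
  else (af p.1 ν, .conj (af p.2 ν) ψ')

/-- The unique run of the monitor from state `p` on the ω-word `w`. -/
noncomputable def monRun (ψ' : LTL AP) (p : LTL AP × LTL AP) (w : ℕ → Set AP) :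
    ℕ → LTL AP × LTL AP
  | 0 => p
  | n + 1 => monStep ψ' (monRun ψ' p w n) (w n)

/-- The monitor accepts `w` from state `p`: infinitely many accepting transitions
(those with `af(ξ₁,ν) ≡_P tt`) are taken on the unique run from `p`. -/
noncomputable def MonAcceptsFrom (ψ' : LTL AP) (p : LTL AP × LTL AP)
    (w : ℕ → Set AP) : Prop :=
  ∀ N, ∃ i, N ≤ i ∧ PropEquiv (af (monRun ψ' p w i).1 (w i)) .tt

/-- The states of the monitor DBA: pairs reachable from the initial state
`(ψ', tt)`. -/
inductive MonReach (ψ' : LTL AP) : LTL AP × LTL AP → Prop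
  | init : MonReach ψ' (ψ', .tt)
  | step {p : LTL AP × LTL AP} {ν : Set AP} :
      MonReach ψ' p → MonReach ψ' (monStep ψ' p ν)

@[simp]
theorem wordDrop_zero (w : ℕ → Set AP) : wordDrop 0 w = w := rfl

@[simp]
theorem wordDrop_succ_prependWord_singleton (k : ℕ) (ν : Set AP) (w : ℕ → Set AP) :
    wordDrop (k + 1) (prependWord [ν] w) = wordDrop k w := by
  funext i
  simp [wordDrop, prependWord]

theorem sat_af_iff (φ : LTL AP) (ν : Set AP) (w : ℕ → Set AP) :
    Sat w (af φ ν) ↔ Sat (prependWord [ν] w) φ := by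
  induction φ generalizing w with
  | tt | ff => rfl
  | atom a | natom a => by_cases h : a ∈ ν <;> simp [af, Sat, prependWord, h]
  | conj φ ψ ih₁ ih₂ => exact and_congr (ih₁ w) (ih₂ w)
  | disj φ ψ ih₁ ih₂ => exact or_congr (ih₁ w) (ih₂ w)
  | next φ => simp [af, Sat]
  | ev φ ih => simp [af, Sat, ← Nat.or_exists_add_one (p := fun k => Sat (wordDrop k _) φ), ih]
  | alw φ ih => simp [af, Sat, ← Nat.and_forall_add_one (p := fun k => Sat (wordDrop k _) φ), ih]
  | untl φ ψ ih₁ ih₂ =>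
    simp only [af, Sat, ih₁, ih₂]
    conv_rhs => rw [← Nat.or_exists_add_one]
    simp only [wordDrop_zero, wordDrop_succ_prependWord_singleton, Nat.forall_lt_succ_left,
      Nat.not_lt_zero, IsEmpty.forall_iff, forall_const, and_true]
    simp only [and_left_comm (a := Sat (wordDrop _ w) ψ), exists_and_left]

theorem sat_af_of_forall_sat_imp {φ ψ : LTL AP} (h : ∀ w, Sat w φ → Sat w ψ) (ν : Set AP)
    (w : ℕ → Set AP) (hφ : Sat w (af φ ν)) : Sat w (af ψ ν) :=
  (sat_af_iff ψ ν w).2 (h _ ((sat_af_iff φ ν w).1 hφ))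

theorem exists_sat_conj_iff_monStep (ψ' : LTL AP) (p : LTL AP × LTL AP) (ν : Set AP) :
    ∃ ξ : LTL AP, ∀ w, Sat w (.conj (monStep ψ' p ν).1 (monStep ψ' p ν).2) ↔
      Sat w (.conj ξ ψ') := by
  by_cases hacc : PropEquiv (af p.1 ν) .tt
  · refine ⟨af p.2 ν, fun w => ?_⟩
    simp only [monStep, if_pos hacc, Sat, and_true]
  · refine ⟨.conj (af p.1 ν) (af p.2 ν), fun w => ?_⟩
    simp only [monStep, if_neg hacc, Sat, and_assoc]

theorem MonReach.exists_sat_conj_iff {ψ' : LTL AP} {p : LTL AP × LTL AP} (h : MonReach ψ' p) :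
    ∃ ξ : LTL AP, ∀ w, Sat w (.conj p.1 p.2) ↔ Sat w (.conj ξ ψ') := by
  cases h with
  | init => exact ⟨.tt, fun w => and_comm⟩
  | step _ => exact exists_sat_conj_iff_monStep ψ' _ _

/-- For every reachable state `(ξ₁, ξ₂)` of the monitor DBA `U(Gψ')`, there exists a
formula `ξ` such that `ξ₁ ∧ ξ₂` is logically equivalent to `ξ ∧ ψ'`; consequently
`af(ξ₁, ν) ∧ af(ξ₂, ν)` semantically entails `af(ψ', ν)` for every letter `ν`. -/
theorem stmt_16 {AP : Type} (ψ' ξ₁ ξ₂ : LTL AP)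
    (hreach : MonReach ψ' (ξ₁, ξ₂)) :
    (∃ ξ : LTL AP, ∀ w : ℕ → Set AP,
        Sat w (.conj ξ₁ ξ₂) ↔ Sat w (.conj ξ ψ')) ∧
    (∀ (ν : Set AP) (w : ℕ → Set AP),
        Sat w (.conj (af ξ₁ ν) (af ξ₂ ν)) → Sat w (af ψ' ν)) := by
  obtain ⟨ξ, hξ⟩ := hreach.exists_sat_conj_iff
  exact ⟨⟨ξ, hξ⟩, sat_af_of_forall_sat_imp fun w hw => ((hξ w).1 hw).2⟩
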